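/- For a scalar field Lagrangian L(X,φ) with n = √(2X) L_X, imposing dn = 0 yields the constraint (L_X + 2X L_{XX}) dX = −2X L_{Xφ} dφ, and the resulting ratio (p_X dX + p_φ dφ)/(ρ_X dX + ρ_φ dφ) at fixed n equals (2X L_{Xφ}/L_φ)·c_s² − 1, where c_s² = L_X/(L_X + 2X L_{XX}). -/

import Mathlib

/-! Writing `A = L_X + 2X L_{XX}` and `B = 2X L_{Xφ}`, the constraint makes `ρ_X dX = -B dφ`,
so the denominator collapses to `-L_φ dφ`; dividing the numerator `(L_φ - B L_X / A) dφ` by it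
gives `(B / L_φ) c_s² - 1`. -/

theorem ratio_of_differentials_along_constraint {K : Type*} [Field K] {LX Lφ A B dφ : K}
    (hLφ : Lφ ≠ 0) (hA : A ≠ 0) (hdφ : dφ ≠ 0) :
    (LX * (-(B * dφ) / A) + Lφ * dφ) / (A * (-(B * dφ) / A) + (B - Lφ) * dφ)
      = B / Lφ * (LX / A) - 1 := by
  have hden : A * (-(B * dφ) / A) + (B - Lφ) * dφ = -Lφ * dφ := by
    rw [mul_div_cancel₀ _ hA]
    ring
  rw [hden]
  field_simp
  ring

theorem stmt15_general (LX Lφ LXX LXφ X dφ : ℝ)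
    (hLφ : Lφ ≠ 0) (hden : LX + 2 * X * LXX ≠ 0) (hdφ : dφ ≠ 0) :
    let dX : ℝ := -(2 * X * LXφ * dφ) / (LX + 2 * X * LXX)
    let cs2 : ℝ := LX / (LX + 2 * X * LXX)
    (LX + 2 * X * LXX) * dX = -(2 * X * LXφ) * dφ ∧
    (LX * dX + Lφ * dφ) /
      ((LX + 2 * X * LXX) * dX + (2 * X * LXφ - Lφ) * dφ)
      = (2 * X * LXφ / Lφ) * cs2 - 1 := by
  refine ⟨?_, ratio_of_differentials_along_constraint hLφ hden hdφ⟩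
  rw [mul_div_cancel₀ _ hden, neg_mul]

/-- Imposing dn = 0 gives (L_X + 2X L_{XX}) dX = −2X L_{Xφ} dφ, and the ratio
(p_X dX + p_φ dφ)/(ρ_X dX + ρ_φ dφ) at fixed n equals (2X L_{Xφ}/L_φ)c_s² − 1,
where c_s² = L_X/(L_X + 2X L_{XX}). -/
theorem stmt15 (LX Lφ LXX LXφ X dφ : ℝ) (hX : 0 < X)
    (hLφ : Lφ ≠ 0) (hden : LX + 2 * X * LXX ≠ 0) (hdφ : dφ ≠ 0) :
    let dX : ℝ := -(2 * X * LXφ * dφ) / (LX + 2 * X * LXX)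
    let cs2 : ℝ := LX / (LX + 2 * X * LXX)
    (LX + 2 * X * LXX) * dX = -(2 * X * LXφ) * dφ ∧
    (LX * dX + Lφ * dφ) /
      ((LX + 2 * X * LXX) * dX + (2 * X * LXφ - Lφ) * dφ)
      = (2 * X * LXφ / Lφ) * cs2 - 1 :=
  stmt15_general LX Lφ LXX LXφ X dφ hLφ hden hdφ
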